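/- Let L be a subdirectly irreducible pk-algebra such that every prime filter of L that is not maximal is contained in every maximal prime filter of L. Then L satisfies a* ≤ C(b) ∨ T(a)* for all a, b ∈ L. -/

import Mathlib

/-- A pseudocomplemented De Morgan algebra (pm-algebra): a bounded distributive
lattice with a De Morgan involution `dm` and a pseudocomplement `pc`. -/
class PMAlgebra (L : Type*) extends DistribLattice L, BoundedOrder L where
  dm : L → L
  pc : L → L
  dm_dm : ∀ a : L, dm (dm a) = a
  dm_inf : ∀ a b : L, dm (a ⊓ b) = dm a ⊔ dm b
  pc_iff : ∀ a b : L, a ⊓ b = ⊥ ↔ b ≤ pc a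

namespace PMAlgebra

variable {L : Type*} [PMAlgebra L]

/-- A congruence of a pm-algebra. -/
def IsCongruence (θ : L → L → Prop) : Prop :=
  Equivalence θ ∧
  (∀ a b c d : L, θ a b → θ c d → θ (a ⊓ c) (b ⊓ d)) ∧
  (∀ a b c d : L, θ a b → θ c d → θ (a ⊔ c) (b ⊔ d)) ∧
  (∀ a b : L, θ a b → θ (dm a) (dm b)) ∧
  (∀ a b : L, θ a b → θ (pc a) (pc b))

/-- `L` is simple: it has more than one element and its only congruences are
equality and the total relation. -/
def Simple (L : Type*) [PMAlgebra L] : Prop :=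
  Nontrivial L ∧ ∀ θ : L → L → Prop, IsCongruence θ →
    θ = (fun a b => a = b) ∨ θ = (fun _ _ => True)

/-- `L` is subdirectly irreducible: there is a congruence `μ ≠ Eq` contained in
every congruence different from equality. -/
def SubdirectlyIrreducible (L : Type*) [PMAlgebra L] : Prop :=
  ∃ μ : L → L → Prop, IsCongruence μ ∧ μ ≠ (fun a b => a = b) ∧
    ∀ θ : L → L → Prop, IsCongruence θ → θ ≠ (fun a b => a = b) →
      ∀ a b : L, μ a b → θ a b

/-- A prime filter of the underlying lattice of `L`. -/
def IsPrimeFilter (P : Set L) : Prop :=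
  P.Nonempty ∧ P ≠ Set.univ ∧
  (∀ a b : L, a ∈ P → a ≤ b → b ∈ P) ∧
  (∀ a b : L, a ∈ P → b ∈ P → a ⊓ b ∈ P) ∧
  (∀ a b : L, a ⊔ b ∈ P → a ∈ P ∨ b ∈ P)

/-- The Birula–Rasiowa transformation. -/
def phi (P : Set L) : Set L := {a : L | dm a ∉ P}

/-- `P` is a maximal prime filter. -/
def IsMaximalPF (P : Set L) : Prop :=
  IsPrimeFilter P ∧ ∀ Q : Set L, IsPrimeFilter Q → P ⊆ Q → Q = P

/-- `P` is a minimal prime filter. -/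
def IsMinimalPF (P : Set L) : Prop :=
  IsPrimeFilter P ∧ ∀ Q : Set L, IsPrimeFilter Q → Q ⊆ P → Q = P

/-- The body of `L`: prime filters that are neither maximal nor minimal. -/
def body (L : Type*) [PMAlgebra L] : Set (Set L) :=
  {P : Set L | IsPrimeFilter P ∧ ¬ IsMaximalPF P ∧ ¬ IsMinimalPF P}

/-- The prime filter space of `L` is φ-connected. -/
def PhiConnected (L : Type*) [PMAlgebra L] : Prop :=
  ∀ S : Set (Set L), S ⊆ {P : Set L | IsPrimeFilter P} → S.Nonempty →
    (∀ P Q : Set L, P ∈ S → IsPrimeFilter Q → P ⊆ Q → Q ∈ S) →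
    (∀ P Q : Set L, P ∈ S → IsPrimeFilter Q → Q ⊆ P → Q ∈ S) →
    (∀ P : Set L, P ∈ S → phi P ∈ S) →
    S = {P : Set L | IsPrimeFilter P}

/-- The Kleene identity. -/
def Kleene (L : Type*) [PMAlgebra L] : Prop :=
  ∀ a b : L, a ⊓ dm a ≤ b ⊔ dm b

/-- The term `C(x) = (x ∧ x') ∨ (x ∧ x')*`. -/
def C (x : L) : L := (x ⊓ dm x) ⊔ pc (x ⊓ dm x)

/-- The term `T(x) = C(x) ∧ C(x)'`. -/
def T (x : L) : L := C x ⊓ dm (C x)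

end PMAlgebra

open PMAlgebra


/-!
A prime filter separating `a*` from `C(b)` cannot be maximal, because a maximal prime filter
contains every element or its pseudocomplement, hence contains `C(b) = e ∨ e*` for `e = b ∧ b'`.
So it lies in every maximal prime filter; for `a ≠ 0` one of these contains `a`, and then also
`a ∧ a* = 0`. For `a = 0` the inequality holds since `T(0) = 0`.
-/

open Order

namespace PMAlgebra

variable {L : Type*} [PMAlgebra L]

theorem inf_pc_self (a : L) : a ⊓ pc a = ⊥ := (pc_iff a (pc a)).mpr le_rfl

theorem pc_bot : pc (⊥ : L) = ⊤ := top_le_iff.mp ((pc_iff ⊥ ⊤).mp (bot_inf_eq ⊤))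

theorem dm_top : dm (⊤ : L) = ⊥ := by
  simpa [dm_dm] using (dm_inf (dm (⊥ : L)) ⊤).symm

theorem C_bot : C (⊥ : L) = ⊤ := by simp [C, pc_bot]

theorem T_bot : T (⊥ : L) = ⊥ := by simp [T, C_bot, dm_top]

namespace IsPrimeFilter

variable {P : Set L}

theorem mem_of_le (hP : IsPrimeFilter P) {x y : L} (hx : x ∈ P) (hxy : x ≤ y) : y ∈ P :=
  hP.2.2.1 x y hx hxy

theorem inf_mem (hP : IsPrimeFilter P) {x y : L} (hx : x ∈ P) (hy : y ∈ P) : x ⊓ y ∈ P :=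
  hP.2.2.2.1 x y hx hy

theorem mem_or_mem (hP : IsPrimeFilter P) {x y : L} (hxy : x ⊔ y ∈ P) : x ∈ P ∨ y ∈ P :=
  hP.2.2.2.2 x y hxy

theorem bot_notMem (hP : IsPrimeFilter P) : (⊥ : L) ∉ P := fun h =>
  hP.2.1 (Set.eq_univ_of_forall fun _ => hP.mem_of_le h bot_le)

end IsPrimeFilter

theorem exists_isPrimeFilter_of_isPFilter {F : Set L} (hF : IsPFilter F) {v : L} (hv : v ∉ F) :
    ∃ P : Set L, IsPrimeFilter P ∧ F ⊆ P ∧ v ∉ P := by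
  have hdisj : Disjoint (hF.toPFilter : Set L) (Ideal.principal v) :=
    Set.disjoint_left.2 fun _ hw hwv => hv (PFilter.mem_of_le (Ideal.mem_principal.1 hwv) hw)
  obtain ⟨J, hJ, hvJ, hFJ⟩ := DistribLattice.prime_ideal_of_disjoint_filter_ideal hdisj
  have hFJ' : F ⊆ (J : Set L)ᶜ := hFJ.subset_compl_right
  refine ⟨(J : Set L)ᶜ, ⟨hF.toPFilter.nonempty.mono hFJ', ?_, ?_, ?_, ?_⟩, hFJ',
    fun h => h (hvJ Ideal.mem_principal_self)⟩
  · exact fun h => Set.eq_univ_iff_forall.1 h ⊥ J.bot_mem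
  · exact fun x y hx hxy hy => hx (J.lower hxy hy)
  · exact fun x y hx hy hxy => (hJ.mem_or_mem hxy).elim hx hy
  · exact fun x y hxy => not_and_or.1 fun h => hxy (Ideal.sup_mem h.1 h.2)

theorem exists_isPrimeFilter_of_not_le {u v : L} (h : ¬ u ≤ v) :
    ∃ P : Set L, IsPrimeFilter P ∧ u ∈ P ∧ v ∉ P := by
  obtain ⟨P, hP, huP, hvP⟩ :=
    exists_isPrimeFilter_of_isPFilter (PFilter.principal u).isPFilter (v := v) h
  exact ⟨P, hP, huP (le_refl u), hvP⟩

theorem isPrimeFilter_sUnion {c : Set (Set L)} (hc : c ⊆ {P | IsPrimeFilter P})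
    (hchain : IsChain (· ⊆ ·) c) (hne : c.Nonempty) : IsPrimeFilter (⋃₀ c) := by
  obtain ⟨P₀, hP₀⟩ := hne
  refine ⟨(hc hP₀).1.mono (Set.subset_sUnion_of_mem hP₀), ?_, ?_, ?_, ?_⟩
  · intro h
    obtain ⟨P, hP, hbot⟩ := Set.mem_sUnion.1 (h ▸ Set.mem_univ (⊥ : L))
    exact (hc hP).bot_notMem hbot
  · rintro x y ⟨P, hP, hx⟩ hxy
    exact ⟨P, hP, (hc hP).mem_of_le hx hxy⟩
  · rintro x y ⟨P, hP, hx⟩ ⟨Q, hQ, hy⟩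
    rcases hchain.total hP hQ with hPQ | hQP
    · exact ⟨Q, hQ, (hc hQ).inf_mem (hPQ hx) hy⟩
    · exact ⟨P, hP, (hc hP).inf_mem hx (hQP hy)⟩
  · rintro x y ⟨P, hP, hxy⟩
    exact ((hc hP).mem_or_mem hxy).imp (fun hx => ⟨P, hP, hx⟩) (fun hy => ⟨P, hP, hy⟩)

theorem IsPrimeFilter.exists_isMaximalPF_superset {P : Set L} (hP : IsPrimeFilter P) :
    ∃ Q, IsMaximalPF Q ∧ P ⊆ Q := by
  obtain ⟨Q, hPQ, hQ⟩ := zorn_subset_nonempty {Q : Set L | IsPrimeFilter Q}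
    (fun c hc hchain hne =>
      ⟨⋃₀ c, isPrimeFilter_sUnion hc hchain hne, fun _ => Set.subset_sUnion_of_mem⟩) P hP
  exact ⟨Q, ⟨hQ.prop, fun R hR hQR => (hQ.eq_of_subset hR hQR).symm⟩, hPQ⟩

theorem exists_isMaximalPF_mem {a : L} (ha : a ≠ ⊥) : ∃ V, IsMaximalPF V ∧ a ∈ V := by
  obtain ⟨P, hP, haP, -⟩ := exists_isPrimeFilter_of_not_le (mt le_bot_iff.1 ha)
  obtain ⟨V, hV, hPV⟩ := hP.exists_isMaximalPF_superset
  exact ⟨V, hV, hPV haP⟩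

theorem IsMaximalPF.mem_or_pc_mem {P : Set L} (hP : IsMaximalPF P) (z : L) :
    z ∈ P ∨ pc z ∈ P := by
  by_contra! ⟨hz, hpz⟩
  obtain ⟨p₀, hp₀⟩ := hP.1.1
  set F := {w : L | ∃ p ∈ P, z ⊓ p ≤ w}
  have hF : IsPFilter F := IsPFilter.of_def ⟨z, p₀, hp₀, inf_le_left⟩
    (fun x ⟨p, hp, hx⟩ y ⟨q, hq, hy⟩ => ⟨x ⊓ y,
      ⟨p ⊓ q, hP.1.inf_mem hp hq, le_inf ((inf_le_inf_left z inf_le_left).trans hx)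
        ((inf_le_inf_left z inf_le_right).trans hy)⟩, inf_le_left, inf_le_right⟩)
    (fun hxy ⟨p, hp, hx⟩ => ⟨p, hp, hx.trans hxy⟩)
  have hbot : (⊥ : L) ∉ F := fun ⟨p, hp, hle⟩ =>
    hpz (hP.1.mem_of_le hp ((pc_iff z p).1 (le_bot_iff.1 hle)))
  obtain ⟨Q, hQ, hFQ, -⟩ := exists_isPrimeFilter_of_isPFilter hF hbot
  have hQP : Q = P := hP.2 Q hQ fun p hp => hFQ ⟨p, hp, inf_le_right⟩
  exact hz (hQP ▸ hFQ ⟨p₀, hp₀, inf_le_left⟩)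

theorem IsMaximalPF.C_mem {P : Set L} (hP : IsMaximalPF P) (x : L) : C x ∈ P :=
  (hP.mem_or_pc_mem (x ⊓ dm x)).elim (hP.1.mem_of_le · le_sup_left)
    (hP.1.mem_of_le · le_sup_right)

theorem pc_le_C_of_ne_bot
    (hbundle : ∀ P Q : Set L, IsPrimeFilter P → ¬ IsMaximalPF P → IsMaximalPF Q → P ⊆ Q)
    {a : L} (ha : a ≠ ⊥) (b : L) : pc a ≤ C b := by
  by_contra h
  obtain ⟨P, hP, haP, hbP⟩ := exists_isPrimeFilter_of_not_le h
  obtain ⟨V, hV, haV⟩ := exists_isMaximalPF_mem ha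
  have hPV : P ⊆ V := hbundle P V hP (fun hPmax => hbP (hPmax.C_mem b)) hV
  exact hV.1.bot_notMem (inf_pc_self a ▸ hV.1.inf_mem haV (hPV haP))

end PMAlgebra

theorem identity_of_nonmax_subset_max_general {L : Type*} [PMAlgebra L]
    (hbundle : ∀ P Q : Set L, IsPrimeFilter P → ¬ IsMaximalPF P →
      IsMaximalPF Q → P ⊆ Q) :
    ∀ a b : L, pc a ≤ C b ⊔ pc (T a) := by
  intro a b
  rcases eq_or_ne a ⊥ with rfl | ha
  · simp [T_bot, pc_bot]
  · exact le_sup_of_le_left (pc_le_C_of_ne_bot hbundle ha b)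

/-- A subdirectly irreducible pk-algebra in which every non-maximal prime
filter is contained in every maximal prime filter satisfies
`a* ≤ C(b) ∨ T(a)*`. -/
theorem identity_of_nonmax_subset_max {L : Type*} [PMAlgebra L]
    (hk : Kleene L) (hsi : SubdirectlyIrreducible L)
    (hbundle : ∀ P Q : Set L, IsPrimeFilter P → ¬ IsMaximalPF P →
      IsMaximalPF Q → P ⊆ Q) :
    ∀ a b : L, pc a ≤ C b ⊔ pc (T a) :=
  identity_of_nonmax_subset_max_general hbundle
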